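/- Let E be a row-finite directed graph and K a field. The Cohn path algebra C_K(E) is prime if and only if E has exactly one vertex. -/

import Mathlib

/-! Basic infrastructure: directed graphs and their path algebras.

The path algebra `KE` is realized as the non-unital subalgebra generated by the
(images of the) vertices and edges inside the unital algebra `PA K E`, which is the
quotient of the free algebra on vertices and edges by the usual path-algebra
relations (vertices are orthogonal idempotents acting as local units on edges).
Words of composable edges are exactly the paths, so `KE` has the paths as a basis. -/

/-- A directed graph `E = (E⁰, E¹, s, r)`. -/
structure DirGraph : Type 1 where
  V : Type
  Edge : Type
  s : Edge → V
  r : Edge → V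

/-- A (non-unital, possibly non-closed) subset `S` of an algebra is *prime* if it is nonzero
and `a S b = 0` implies `a = 0` or `b = 0` for `a, b ∈ S`. -/
def IsPrimeSet {A : Type} [NonUnitalNonAssocSemiring A] (S : Set A) : Prop :=
  (∃ a ∈ S, a ≠ 0) ∧ ∀ a ∈ S, ∀ b ∈ S, (∀ x ∈ S, a * x * b = 0) → a = 0 ∨ b = 0

/-- `J` is a two-sided ideal of the (possibly non-unital) subalgebra with carrier `S`. -/
def IsIdealOf (K : Type) [Field K] {A : Type} [Ring A] [Algebra K A] (S J : Set A) : Prop :=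
  J ⊆ S ∧ (0 : A) ∈ J ∧ (∀ x ∈ J, ∀ y ∈ J, x + y ∈ J) ∧
    (∀ k : K, ∀ x ∈ J, k • x ∈ J) ∧ (∀ a ∈ S, ∀ x ∈ J, a * x ∈ J ∧ x * a ∈ J)

namespace DirGraph

/-- Generators of the path algebra: vertices and edges. -/
abbrev Gen (E : DirGraph) : Type := E.V ⊕ E.Edge

variable (K : Type) [Field K] (E : DirGraph)

/-- The defining relations of the path algebra: vertices are orthogonal idempotents,
`s(e)·e = e`, `e·r(e) = e`, and all other vertex-edge products vanish. -/
inductive PathRel : FreeAlgebra K E.Gen → FreeAlgebra K E.Gen → Prop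
  | vv_eq (u : E.V) :
      PathRel (FreeAlgebra.ι K (Sum.inl u) * FreeAlgebra.ι K (Sum.inl u))
        (FreeAlgebra.ι K (Sum.inl u))
  | vv_ne (u v : E.V) : u ≠ v →
      PathRel (FreeAlgebra.ι K (Sum.inl u) * FreeAlgebra.ι K (Sum.inl v)) 0
  | ve_eq (e : E.Edge) :
      PathRel (FreeAlgebra.ι K (Sum.inl (E.s e)) * FreeAlgebra.ι K (Sum.inr e))
        (FreeAlgebra.ι K (Sum.inr e))
  | ve_ne (u : E.V) (e : E.Edge) : E.s e ≠ u →
      PathRel (FreeAlgebra.ι K (Sum.inl u) * FreeAlgebra.ι K (Sum.inr e)) 0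
  | ev_eq (e : E.Edge) :
      PathRel (FreeAlgebra.ι K (Sum.inr e) * FreeAlgebra.ι K (Sum.inl (E.r e)))
        (FreeAlgebra.ι K (Sum.inr e))
  | ev_ne (e : E.Edge) (u : E.V) : E.r e ≠ u →
      PathRel (FreeAlgebra.ι K (Sum.inr e) * FreeAlgebra.ι K (Sum.inl u)) 0

/-- The ambient unital algebra (the unitalization of the path algebra). -/
abbrev PA : Type := RingQuot (E.PathRel K)

/-- The image of a vertex in the path algebra. -/
noncomputable def vtx (u : E.V) : E.PA K :=
  RingQuot.mkAlgHom K (E.PathRel K) (FreeAlgebra.ι K (Sum.inl u))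

/-- The image of an edge in the path algebra. -/
noncomputable def edg (e : E.Edge) : E.PA K :=
  RingQuot.mkAlgHom K (E.PathRel K) (FreeAlgebra.ι K (Sum.inr e))

/-- The path algebra `KE`: the (non-unital) subalgebra spanned by all paths, i.e.
generated by the vertices and edges. -/
noncomputable def KE : NonUnitalSubalgebra K (E.PA K) :=
  NonUnitalAlgebra.adjoin K (Set.range (E.vtx K) ∪ Set.range (E.edg K))

/-- The center `Z(KE)` of the path algebra. -/
def relCenter : Set (E.PA K) :=
  {z | z ∈ E.KE K ∧ ∀ a ∈ E.KE K, a * z = z * a}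

/-- `E.IsPathFrom u v l` : the list of edges `l` is a path from `u` to `v`
(`l = []` is the trivial path at `u = v`). -/
def IsPathFrom : E.V → E.V → List E.Edge → Prop
  | u, v, [] => u = v
  | u, v, e :: l => E.s e = u ∧ IsPathFrom (E.r e) v l

/-- The element of the path algebra corresponding to the path starting at `u`
with list of edges `l` (for `l = []` this is the vertex `u` itself). -/
noncomputable def pathElem (u : E.V) (l : List E.Edge) : E.PA K :=
  E.vtx K u * (l.map (E.edg K)).prod

/-- The sum of all vertices: the unit of `KE` when `E⁰` is finite. -/
noncomputable def unitKE : E.PA K := ∑ᶠ u : E.V, E.vtx K u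

/-- The scalar multiples `K·1` of the unit of `KE`. -/
noncomputable def scalarSet : Set (E.PA K) := Set.range fun k : K => k • E.unitKE K

/-- One step in the underlying undirected graph. -/
def Step (u v : E.V) : Prop :=
  (∃ e : E.Edge, E.s e = u ∧ E.r e = v) ∨ (∃ e : E.Edge, E.s e = v ∧ E.r e = u)

/-- `u ∼ v` : the vertices `u` and `v` are connected in the underlying undirected graph. -/
def Connected (u v : E.V) : Prop := Relation.ReflTransGen E.Step u v

/-- The graph `E` is connected. -/
def IsConnectedGraph : Prop := ∀ u v : E.V, E.Connected u v

/-- The graph `E` is a cycle: `n ≥ 1` vertices `u₁, …, uₙ` and `n` edges `f₁, …, fₙ` with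
`s(fᵢ) = uᵢ`, `r(fᵢ) = uᵢ₊₁` (indices mod `n`). -/
def IsCycleGraph : Prop :=
  ∃ n : ℕ, ∃ hn : 0 < n, ∃ (hv : Fin n ≃ E.V) (he : Fin n ≃ E.Edge),
    ∀ i : Fin n, E.s (he i) = hv i ∧ E.r (he i) = hv ⟨(i.1 + 1) % n, Nat.mod_lt _ hn⟩

end DirGraph

namespace DirGraph

/-- The extended graph `Ê`: same vertices, edges `E¹ ⊕ (E¹)*`, where the ghost edge `e*`
(second component) has `s(e*) = r(e)` and `r(e*) = s(e)`. -/
def ext (E : DirGraph) : DirGraph where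
  V := E.V
  Edge := E.Edge ⊕ E.Edge
  s := Sum.elim E.s E.r
  r := Sum.elim E.r E.s

variable (K : Type) [Field K] (E : DirGraph)

/-- Defining relations of the Cohn (`t = false`) and Leavitt (`t = true`) path algebras:
the path-algebra relations of the extended graph, the relations (CK1)
`e*e' = δ_{e,e'} r(e)`, and — only for `t = true` — the relations (CK2)
`v = Σ_{s(e)=v} ee*` at every regular vertex `v`. -/
inductive CLRel : Bool → FreeAlgebra K E.ext.Gen → FreeAlgebra K E.ext.Gen → Prop
  | base (t : Bool) {a b : FreeAlgebra K E.ext.Gen} : E.ext.PathRel K a b → CLRel t a b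
  | ck1_eq (t : Bool) (e : E.Edge) :
      CLRel t (FreeAlgebra.ι K (Sum.inr (Sum.inr e)) * FreeAlgebra.ι K (Sum.inr (Sum.inl e)))
        (FreeAlgebra.ι K (Sum.inl (E.r e)))
  | ck1_ne (t : Bool) (e f : E.Edge) : e ≠ f →
      CLRel t (FreeAlgebra.ι K (Sum.inr (Sum.inr e)) * FreeAlgebra.ι K (Sum.inr (Sum.inl f))) 0
  | ck2 (v : E.V) (h : {e : E.Edge | E.s e = v}.Finite)
      (hne : {e : E.Edge | E.s e = v}.Nonempty) :
      CLRel true (FreeAlgebra.ι K (Sum.inl v))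
        (h.toFinset.sum fun e =>
          FreeAlgebra.ι K (Sum.inr (Sum.inl e)) * FreeAlgebra.ι K (Sum.inr (Sum.inr e)))

/-- The ambient unital algebra containing the Cohn (`t = false`) or
Leavitt (`t = true`) path algebra. -/
abbrev CL (t : Bool) : Type := RingQuot (E.CLRel K t)

/-- The image of a vertex in `C_K(E)` / `L_K(E)`. -/
noncomputable def clvtx (t : Bool) (u : E.V) : E.CL K t :=
  RingQuot.mkAlgHom K (E.CLRel K t) (FreeAlgebra.ι K (Sum.inl u))

/-- The image of a (real) edge in `C_K(E)` / `L_K(E)`. -/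
noncomputable def cledg (t : Bool) (e : E.Edge) : E.CL K t :=
  RingQuot.mkAlgHom K (E.CLRel K t) (FreeAlgebra.ι K (Sum.inr (Sum.inl e)))

/-- The image of a ghost edge `e*` in `C_K(E)` / `L_K(E)`. -/
noncomputable def clghost (t : Bool) (e : E.Edge) : E.CL K t :=
  RingQuot.mkAlgHom K (E.CLRel K t) (FreeAlgebra.ι K (Sum.inr (Sum.inr e)))

/-- The Cohn path algebra `C_K(E)` (`t = false`) or Leavitt path algebra `L_K(E)`
(`t = true`): the non-unital subalgebra generated by vertices, edges, and ghost edges. -/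
noncomputable def clSub (t : Bool) : NonUnitalSubalgebra K (E.CL K t) :=
  NonUnitalAlgebra.adjoin K
    (Set.range (E.clvtx K t) ∪ Set.range (E.cledg K t) ∪ Set.range (E.clghost K t))

/-- The center of `C_K(E)` (`t = false`) or of `L_K(E)` (`t = true`). -/
def clCenter (t : Bool) : Set (E.CL K t) :=
  {z | z ∈ E.clSub K t ∧ ∀ a ∈ E.clSub K t, a * z = z * a}

/-- The element `μ` of `C_K(E)` / `L_K(E)` for the path `μ` starting at `u` with edges `l`. -/
noncomputable def clPath (t : Bool) (u : E.V) (l : List E.Edge) : E.CL K t :=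
  E.clvtx K t u * (l.map (E.cledg K t)).prod

/-- The element `μ*` of `C_K(E)` / `L_K(E)` for the path `μ` starting at `u` with edges `l`. -/
noncomputable def clPathStar (t : Bool) (u : E.V) (l : List E.Edge) : E.CL K t :=
  ((l.map (E.clghost K t)).reverse).prod * E.clvtx K t u

/-- The sum of all vertices: the unit of `C_K(E)` / `L_K(E)` when `E⁰` is finite. -/
noncomputable def clOne (t : Bool) : E.CL K t := ∑ᶠ u : E.V, E.clvtx K t u

/-- The degree-zero component (w.r.t. the canonical ℤ-grading) of `C_K(E)` / `L_K(E)`: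
the span of the elements `στ*` with `σ, τ` paths of equal length and common range. -/
def clDeg0 (t : Bool) : Submodule K (E.CL K t) :=
  Submodule.span K {x : E.CL K t | ∃ (u w v : E.V) (l m : List E.Edge),
    E.IsPathFrom u v l ∧ E.IsPathFrom w v m ∧ l.length = m.length ∧
    x = E.clPath K t u l * E.clPathStar K t w m}

/-- The span of the symmetric elements `μμ*`, `μ` a path of `E`. -/
def clSymmSpan (t : Bool) : Submodule K (E.CL K t) :=
  Submodule.span K {x : E.CL K t | ∃ (u v : E.V) (l : List E.Edge),
    E.IsPathFrom u v l ∧ x = E.clPath K t u l * E.clPathStar K t u l}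

/-- A subset `H ⊆ E⁰` is hereditary if paths starting in `H` end in `H`. -/
def Hereditary (H : Set E.V) : Prop :=
  ∀ (u v : E.V) (l : List E.Edge), E.IsPathFrom u v l → u ∈ H → v ∈ H

/-- The two-sided ideal of `C_K(E)` / `L_K(E)` generated by a subset `S₀`. -/
def clIdealGen (t : Bool) (S₀ : Set (E.CL K t)) : Set (E.CL K t) :=
  ⋂₀ {J : Set (E.CL K t) | IsIdealOf K (E.clSub K t : Set (E.CL K t)) J ∧ S₀ ⊆ J}

/-- `c` is a cycle based at `u`: a nontrivial closed path visiting no vertex twice. -/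
def IsCycle (u : E.V) (l : List E.Edge) : Prop :=
  l ≠ [] ∧ E.IsPathFrom u u l ∧ (l.map E.s).Nodup

/-- The (closed) path `l` has an exit. -/
def HasExit (l : List E.Edge) : Prop :=
  ∃ f : E.Edge, ∃ e ∈ l, E.s f = E.s e ∧ f ≠ e

/-- Condition (L): every cycle of `E` has an exit. -/
def CondL : Prop := ∀ (u : E.V) (l : List E.Edge), E.IsCycle u l → E.HasExit l

/-- The set of paths (given by their source and list of edges) that end at a vertex of the
cycle `c` and do not contain all the edges of `c`. -/
def endsAtNotContaining (c : List E.Edge) : Set (E.V × List E.Edge) :=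
  {p | (∃ v : E.V, (∃ e ∈ c, E.s e = v) ∧ E.IsPathFrom p.1 v p.2) ∧ ∃ e ∈ c, e ∉ p.2}

/-- `c` is the unique cycle of `E` without exits (uniqueness as a cycle: any cycle
without exits has the same edges as `c`). -/
def UniqueNoExitCycle (c : List E.Edge) : Prop :=
  (∃ u : E.V, E.IsCycle u c ∧ ¬ E.HasExit c) ∧
    ∀ (u' : E.V) (c' : List E.Edge), E.IsCycle u' c' → ¬ E.HasExit c' →
      ∀ e : E.Edge, e ∈ c' ↔ e ∈ c

end DirGraph

/-!
For a vertex `u` emitting finitely many edges, `q_u = u - ∑_{s(e) = u} e e*` is an idempotent with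
`e* q_u = 0` and `q_u e = 0`; it is nonzero because it fixes the trivial path at `u` in the
representation of `C_K(E)` on paths. For `u ≠ w` the right ideal `q_u C_K(E)` is spanned by the
elements `q_u ν*`, all of which annihilate `q_w`, so `q_u C_K(E) q_w = 0` and `C_K(E)` is not
prime. If `E` has a single vertex `v`, then `C_K(E)` is spanned by the `μ ν*`; for
`a = ∑ c_{μ,ν} μ ν* ≠ 0`, pick `(μ₁, ν₁)` in the support with `μ₁` of minimal length: then
`q_v μ₁* a ν₁ q_v = c_{μ₁,ν₁} q_v`, so every nonzero element generates an ideal containing `q_v`,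
which forces primeness.
-/

theorem isPrimeSet_of_forall_exists_mul_mul_eq {A : Type} [NonUnitalSemiring A] {S : Type*}
    [SetLike S A] [MulMemClass S A] (T : S) {q : A} (hqT : q ∈ T) (hq0 : q ≠ 0)
    (hqq : q * q = q) (h : ∀ a ∈ T, a ≠ 0 → ∃ x ∈ T, ∃ y ∈ T, x * a * y = q) :
    IsPrimeSet (T : Set A) := by
  refine ⟨⟨q, hqT, hq0⟩, fun a ha b hb hab => ?_⟩
  by_contra! hab0
  obtain ⟨x, -, y, hy, hxay⟩ := h a ha hab0.1
  obtain ⟨x', hx', y', -, hxby⟩ := h b hb hab0.2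
  apply hq0
  calc q = (x * a * y) * (x' * b * y') := by rw [hxay, hxby, hqq]
    _ = x * (a * (y * x') * b) * y' := by simp only [mul_assoc]
    _ = 0 := by rw [hab _ (mul_mem hy hx'), mul_zero, zero_mul]

theorem mul_list_prod_mem {M S : Type*} [Monoid M] [SetLike S M] [MulMemClass S M] {T : S}
    {x : M} (hx : x ∈ T) {l : List M} (hl : ∀ y ∈ l, y ∈ T) : x * l.prod ∈ T := by
  induction l generalizing x with
  | nil => simpa using hx
  | cons y l ih =>
    rw [List.prod_cons, ← mul_assoc]
    exact ih (mul_mem hx (hl y List.mem_cons_self)) fun z hz => hl z (List.mem_cons_of_mem y hz)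

theorem list_prod_mul_mem {M S : Type*} [Monoid M] [SetLike S M] [MulMemClass S M] {T : S}
    {x : M} (hx : x ∈ T) {l : List M} (hl : ∀ y ∈ l, y ∈ T) : l.prod * x ∈ T := by
  induction l with
  | nil => simpa using hx
  | cons y l ih =>
    rw [List.prod_cons, mul_assoc]
    exact mul_mem (hl y List.mem_cons_self) (ih fun z hz => hl z (List.mem_cons_of_mem y hz))

theorem Submodule.mul_mem_span_of_mem_adjoin {R A : Type*} [CommSemiring R] [NonUnitalSemiring A]
    [Module R A] [IsScalarTower R A A] [SMulCommClass R A A] {S s : Set A}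
    (hS : ∀ b ∈ S, ∀ g ∈ s, b * g ∈ span R S) {x : A}
    (hx : x ∈ NonUnitalAlgebra.adjoin R s) :
    ∀ y ∈ span R S, y * x ∈ span R S := by
  have hgen (g : A) (hg : g ∈ s) : span R S ≤ (span R S).comap (LinearMap.mulRight R g) :=
    span_le.mpr fun b hb => hS b hb g hg
  induction hx using NonUnitalAlgebra.adjoin_induction with
  | mem g hg => exact fun y hy => hgen g hg hy
  | add x₁ x₂ _ _ h₁ h₂ =>
    exact fun y hy => mul_add y x₁ x₂ ▸ add_mem (h₁ y hy) (h₂ y hy)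
  | zero => exact fun y _ => (mul_zero y).symm ▸ zero_mem _
  | mul x₁ x₂ _ _ h₁ h₂ => exact fun y hy => mul_assoc y x₁ x₂ ▸ h₂ _ (h₁ y hy)
  | smul r x _ h => exact fun y hy => (mul_smul_comm r y x).symm ▸ smul_mem _ r (h y hy)

section PartialMapLin

variable (K : Type*) [Semiring K] {X : Type*}

noncomputable def partialMapLin (f : X → Option X) : Module.End K (X →₀ K) :=
  Finsupp.lift (X →₀ K) K X fun x => ((f x).map fun y => Finsupp.single y 1).getD 0

theorem partialMapLin_single (f : X → Option X) (x : X) :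
    partialMapLin K f (Finsupp.single x 1) = ((f x).map fun y => Finsupp.single y 1).getD 0 := by
  simp [partialMapLin]

theorem partialMapLin_mul (f g : X → Option X) :
    partialMapLin K f * partialMapLin K g = partialMapLin K fun x => (g x).bind f := by
  refine Finsupp.lhom_ext' fun x => LinearMap.ext_ring ?_
  simp only [LinearMap.comp_apply, Finsupp.lsingle_apply, Module.End.mul_apply,
    partialMapLin_single]
  cases g x <;> simp [partialMapLin_single]

theorem partialMapLin_none : partialMapLin K (fun _ : X => none) = 0 := by
  refine Finsupp.lhom_ext' fun x => LinearMap.ext_ring ?_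
  simp [partialMapLin_single]

end PartialMapLin

namespace DirGraph

variable (K : Type) [Field K] {E : DirGraph} {t : Bool}

theorem clvtx_mul_self (u : E.V) : E.clvtx K t u * E.clvtx K t u = E.clvtx K t u := by
  rw [clvtx, ← map_mul]
  exact RingQuot.mkAlgHom_rel K (.base t (PathRel.vv_eq (E := E.ext) u))

theorem clvtx_mul_clvtx_of_ne {u w : E.V} (h : u ≠ w) : E.clvtx K t u * E.clvtx K t w = 0 := by
  rw [clvtx, clvtx, ← map_mul, ← map_zero (RingQuot.mkAlgHom K (E.CLRel K t))]
  exact RingQuot.mkAlgHom_rel K (.base t (PathRel.vv_ne (E := E.ext) u w h))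

theorem clvtx_mul_cledg (e : E.Edge) : E.clvtx K t (E.s e) * E.cledg K t e = E.cledg K t e := by
  rw [clvtx, cledg, ← map_mul]
  exact RingQuot.mkAlgHom_rel K (.base t (PathRel.ve_eq (E := E.ext) (.inl e)))

theorem clvtx_mul_cledg_of_ne {u : E.V} {e : E.Edge} (h : E.s e ≠ u) :
    E.clvtx K t u * E.cledg K t e = 0 := by
  rw [clvtx, cledg, ← map_mul, ← map_zero (RingQuot.mkAlgHom K (E.CLRel K t))]
  exact RingQuot.mkAlgHom_rel K (.base t (PathRel.ve_ne (E := E.ext) u (.inl e) h))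

theorem cledg_mul_clvtx (e : E.Edge) : E.cledg K t e * E.clvtx K t (E.r e) = E.cledg K t e := by
  rw [clvtx, cledg, ← map_mul]
  exact RingQuot.mkAlgHom_rel K (.base t (PathRel.ev_eq (E := E.ext) (.inl e)))

theorem clvtx_mul_clghost (e : E.Edge) :
    E.clvtx K t (E.r e) * E.clghost K t e = E.clghost K t e := by
  rw [clvtx, clghost, ← map_mul]
  exact RingQuot.mkAlgHom_rel K (.base t (PathRel.ve_eq (E := E.ext) (.inr e)))

theorem clghost_mul_clvtx (e : E.Edge) :
    E.clghost K t e * E.clvtx K t (E.s e) = E.clghost K t e := by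
  rw [clvtx, clghost, ← map_mul]
  exact RingQuot.mkAlgHom_rel K (.base t (PathRel.ev_eq (E := E.ext) (.inr e)))

theorem clghost_mul_clvtx_of_ne {u : E.V} {e : E.Edge} (h : E.s e ≠ u) :
    E.clghost K t e * E.clvtx K t u = 0 := by
  rw [clvtx, clghost, ← map_mul, ← map_zero (RingQuot.mkAlgHom K (E.CLRel K t))]
  exact RingQuot.mkAlgHom_rel K (.base t (PathRel.ev_ne (E := E.ext) (.inr e) u h))

theorem clghost_mul_cledg (e : E.Edge) :
    E.clghost K t e * E.cledg K t e = E.clvtx K t (E.r e) := by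
  rw [clvtx, cledg, clghost, ← map_mul]
  exact RingQuot.mkAlgHom_rel K (.ck1_eq t e)

theorem clghost_mul_cledg_of_ne {e f : E.Edge} (h : e ≠ f) :
    E.clghost K t e * E.cledg K t f = 0 := by
  rw [cledg, clghost, ← map_mul, ← map_zero (RingQuot.mkAlgHom K (E.CLRel K t))]
  exact RingQuot.mkAlgHom_rel K (.ck1_ne t e f h)

theorem clvtx_mem_clSub (u : E.V) : E.clvtx K t u ∈ E.clSub K t :=
  NonUnitalAlgebra.subset_adjoin K (.inl (.inl ⟨u, rfl⟩))

theorem cledg_mem_clSub (e : E.Edge) : E.cledg K t e ∈ E.clSub K t :=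
  NonUnitalAlgebra.subset_adjoin K (.inl (.inr ⟨e, rfl⟩))

theorem clghost_mem_clSub (e : E.Edge) : E.clghost K t e ∈ E.clSub K t :=
  NonUnitalAlgebra.subset_adjoin K (.inr ⟨e, rfl⟩)

theorem clSub_eq_bot_of_isEmpty [IsEmpty E.V] : E.clSub K t = ⊥ := by
  have : IsEmpty E.Edge := Function.isEmpty E.s
  simp only [clSub, Set.range_eq_empty, Set.union_empty, NonUnitalAlgebra.adjoin_empty]

theorem not_isPrimeSet_clSub_of_isEmpty [IsEmpty E.V] :
    ¬ IsPrimeSet (E.clSub K t : Set (E.CL K t)) := by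
  rintro ⟨⟨a, ha, ha0⟩, -⟩
  rw [SetLike.mem_coe, clSub_eq_bot_of_isEmpty, NonUnitalAlgebra.mem_bot] at ha
  exact ha0 ha

noncomputable def qVtx (t : Bool) {u : E.V} (hu : {e : E.Edge | E.s e = u}.Finite) : E.CL K t :=
  E.clvtx K t u - ∑ e ∈ hu.toFinset, E.cledg K t e * E.clghost K t e

section qVtx

variable {u : E.V} (hu : {e : E.Edge | E.s e = u}.Finite)

theorem qVtx_mem_clSub : qVtx K t hu ∈ E.clSub K t :=
  sub_mem (clvtx_mem_clSub K u)
    (sum_mem fun e _ => mul_mem (cledg_mem_clSub K e) (clghost_mem_clSub K e))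

theorem clghost_mul_qVtx (e : E.Edge) : E.clghost K t e * qVtx K t hu = 0 := by
  rw [qVtx, mul_sub, Finset.mul_sum]
  by_cases hse : E.s e = u
  · have he : e ∈ hu.toFinset := by simpa using hse
    rw [Finset.sum_eq_single_of_mem e he fun f _ hfe => by
        rw [← mul_assoc, clghost_mul_cledg_of_ne K (Ne.symm hfe), zero_mul],
      ← mul_assoc, clghost_mul_cledg, clvtx_mul_clghost, ← hse, clghost_mul_clvtx, sub_self]
  · rw [clghost_mul_clvtx_of_ne K hse, Finset.sum_eq_zero fun f hf => ?_, sub_zero]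
    have hf : E.s f = u := by simpa using hf
    rw [← mul_assoc, clghost_mul_cledg_of_ne K (by rintro rfl; exact hse hf), zero_mul]

theorem qVtx_mul_cledg (e : E.Edge) : qVtx K t hu * E.cledg K t e = 0 := by
  rw [qVtx, sub_mul, Finset.sum_mul]
  by_cases hse : E.s e = u
  · have he : e ∈ hu.toFinset := by simpa using hse
    rw [Finset.sum_eq_single_of_mem e he fun f _ hfe => by
        rw [mul_assoc, clghost_mul_cledg_of_ne K hfe, mul_zero],
      mul_assoc, clghost_mul_cledg, cledg_mul_clvtx, ← hse, clvtx_mul_cledg, sub_self]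
  · rw [clvtx_mul_cledg_of_ne K hse, Finset.sum_eq_zero fun f hf => ?_, sub_zero]
    have hf : E.s f = u := by simpa using hf
    rw [mul_assoc, clghost_mul_cledg_of_ne K (by rintro rfl; exact hse hf), mul_zero]

theorem qVtx_mul_clvtx_self : qVtx K t hu * E.clvtx K t u = qVtx K t hu := by
  rw [qVtx, sub_mul, Finset.sum_mul, clvtx_mul_self]
  refine congrArg _ (Finset.sum_congr rfl fun f hf => ?_)
  have hf : E.s f = u := by simpa using hf
  rw [mul_assoc, ← hf, clghost_mul_clvtx]

theorem qVtx_mul_clvtx_of_ne {w : E.V} (h : w ≠ u) : qVtx K t hu * E.clvtx K t w = 0 := by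
  rw [qVtx, sub_mul, Finset.sum_mul, clvtx_mul_clvtx_of_ne K (Ne.symm h),
    Finset.sum_eq_zero fun f hf => ?_, sub_zero]
  have hf : E.s f = u := by simpa using hf
  rw [mul_assoc, clghost_mul_clvtx_of_ne K (hf ▸ Ne.symm h), mul_zero]

theorem mul_qVtx_eq_mul_clvtx {x : E.CL K t} {w : E.V} (hw : {e : E.Edge | E.s e = w}.Finite)
    (hx : ∀ e, x * E.cledg K t e = 0) : x * qVtx K t hw = x * E.clvtx K t w := by
  rw [qVtx, mul_sub, Finset.mul_sum,
    Finset.sum_eq_zero fun f _ => by rw [← mul_assoc, hx, zero_mul], sub_zero]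

theorem qVtx_mul_self : qVtx K t hu * qVtx K t hu = qVtx K t hu := by
  rw [mul_qVtx_eq_mul_clvtx K hu (qVtx_mul_cledg K hu), qVtx_mul_clvtx_self]

theorem qVtx_mul_qVtx_of_ne {w : E.V} (hw : {e : E.Edge | E.s e = w}.Finite) (h : w ≠ u) :
    qVtx K t hu * qVtx K t hw = 0 := by
  rw [mul_qVtx_eq_mul_clvtx K hw (qVtx_mul_cledg K hu), qVtx_mul_clvtx_of_ne K hu h]

end qVtx

section CohnRep

@[simp] theorem ext_s_inl (e : E.Edge) : E.ext.s (.inl e) = E.s e := rfl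
@[simp] theorem ext_s_inr (e : E.Edge) : E.ext.s (.inr e) = E.r e := rfl
@[simp] theorem ext_r_inl (e : E.Edge) : E.ext.r (.inl e) = E.r e := rfl
@[simp] theorem ext_r_inr (e : E.Edge) : E.ext.r (.inr e) = E.s e := rfl

/- `(u, l)` stands for the path `l` starting at `u`: an edge is prepended, a ghost edge strips the
first edge, and a vertex projects onto the paths starting at it. -/
variable (E) in
open Classical in
noncomputable def cohnStep : E.ext.Gen → E.V × List E.Edge → Option (E.V × List E.Edge)
  | .inl w, (u, l) => if u = w then some (u, l) else none
  | .inr (.inl e), (u, l) => if E.r e = u then some (E.s e, e :: l) else none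
  | .inr (.inr e), (u, f :: l) => if f = e ∧ u = E.s e then some (E.r e, l) else none
  | .inr (.inr _), (_, []) => none

theorem cohnStep_rel ⦃a b : FreeAlgebra K E.ext.Gen⦄ (h : E.CLRel K false a b) :
    FreeAlgebra.lift K (fun g => partialMapLin K (E.cohnStep g)) a =
      FreeAlgebra.lift K (fun g => partialMapLin K (E.cohnStep g)) b := by
  rcases h with ⟨_, h⟩ | ⟨_, e⟩ | ⟨_, e, f, hef⟩
  -- the (CK1) relations must be restated over `E.ext.Gen` for `map_mul` and `lift_ι_apply` to fire
  on_goal 2 =>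
    change FreeAlgebra.lift K _ (FreeAlgebra.ι K (X := E.ext.Gen) (.inr (.inr e)) *
      FreeAlgebra.ι K (X := E.ext.Gen) (.inr (.inl e))) =
        FreeAlgebra.lift K _ (FreeAlgebra.ι K (X := E.ext.Gen) (.inl (E.r e)))
  on_goal 3 =>
    change FreeAlgebra.lift K _ (FreeAlgebra.ι K (X := E.ext.Gen) (.inr (.inr e)) *
      FreeAlgebra.ι K (X := E.ext.Gen) (.inr (.inl f))) = FreeAlgebra.lift K _ 0
  on_goal 1 =>
    rcases h with ⟨u⟩ | ⟨u, v, h⟩ | ⟨e | e⟩ | ⟨u, e | e, h⟩ | ⟨e | e⟩ |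
      ⟨e | e, u, h⟩
  all_goals
    simp only [map_mul, map_zero, FreeAlgebra.lift_ι_apply, partialMapLin_mul,
      ← partialMapLin_none]
    refine congrArg (partialMapLin K) (funext fun ⟨w, l⟩ => ?_)
    rcases l with _ | ⟨f, l⟩ <;>
      simp only [cohnStep, ext_s_inl, ext_s_inr, ext_r_inl, ext_r_inr] at * <;>
      (try split_ifs) <;> grind [cohnStep]

noncomputable def cohnRep : E.CL K false →ₐ[K] Module.End K (E.V × List E.Edge →₀ K) :=
  RingQuot.liftAlgHom K
    ⟨FreeAlgebra.lift K fun g => partialMapLin K (E.cohnStep g), cohnStep_rel K⟩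

theorem cohnRep_mkAlgHom_ι (g : E.ext.Gen) :
    cohnRep K (RingQuot.mkAlgHom K (E.CLRel K false) (FreeAlgebra.ι K g)) =
      partialMapLin K (E.cohnStep g) := by
  simp [cohnRep, RingQuot.liftAlgHom_mkAlgHom_apply]

theorem qVtx_ne_zero {u : E.V} (hu : {e : E.Edge | E.s e = u}.Finite) : qVtx K false hu ≠ 0 := by
  intro h
  have h2 := congrArg (fun z => cohnRep K z (Finsupp.single (u, []) 1)) h
  simp [qVtx, clvtx, cledg, clghost, cohnRep_mkAlgHom_ι, partialMapLin_single, cohnStep] at h2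

end CohnRep

noncomputable def ghostWord (t : Bool) (m : List E.Edge) : E.CL K t :=
  (m.map (E.clghost K t)).reverse.prod

@[simp] theorem ghostWord_nil : ghostWord K t ([] : List E.Edge) = 1 := rfl

theorem ghostWord_cons (e : E.Edge) (m : List E.Edge) :
    ghostWord K t (e :: m) = ghostWord K t m * E.clghost K t e := by
  simp [ghostWord]

noncomputable def qVtxGhostSpan (t : Bool) {u : E.V} (hu : {e : E.Edge | E.s e = u}.Finite) :
    Submodule K (E.CL K t) :=
  Submodule.span K (Set.range fun m => qVtx K t hu * ghostWord K t m)

section TwoVertices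

variable {u : E.V} (hu : {e : E.Edge | E.s e = u}.Finite)

theorem qVtx_mul_ghostWord_mem (m : List E.Edge) :
    qVtx K t hu * ghostWord K t m ∈ qVtxGhostSpan K t hu :=
  Submodule.subset_span ⟨m, rfl⟩

theorem qVtx_mem_qVtxGhostSpan : qVtx K t hu ∈ qVtxGhostSpan K t hu := by
  simpa using qVtx_mul_ghostWord_mem K hu (t := t) []

theorem qVtx_mul_ghostWord_mul_clvtx_mem (m : List E.Edge) (w : E.V) :
    qVtx K t hu * ghostWord K t m * E.clvtx K t w ∈ qVtxGhostSpan K t hu := by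
  cases m with
  | nil =>
    rw [ghostWord_nil, mul_one]
    by_cases h : w = u
    · rw [h, qVtx_mul_clvtx_self]; exact qVtx_mem_qVtxGhostSpan K hu
    · rw [qVtx_mul_clvtx_of_ne K hu h]; exact zero_mem _
  | cons e m =>
    rw [ghostWord_cons, ← mul_assoc, mul_assoc]
    by_cases h : E.s e = w
    · rw [← h, clghost_mul_clvtx, mul_assoc, ← ghostWord_cons]
      exact qVtx_mul_ghostWord_mem K hu _
    · rw [clghost_mul_clvtx_of_ne K h, mul_zero]; exact zero_mem _

theorem qVtx_mul_ghostWord_mul_cledg_mem (m : List E.Edge) (f : E.Edge) :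
    qVtx K t hu * ghostWord K t m * E.cledg K t f ∈ qVtxGhostSpan K t hu := by
  cases m with
  | nil => rw [ghostWord_nil, mul_one, qVtx_mul_cledg]; exact zero_mem _
  | cons e m =>
    rw [ghostWord_cons, ← mul_assoc, mul_assoc]
    by_cases h : e = f
    · rw [← h, clghost_mul_cledg]; exact qVtx_mul_ghostWord_mul_clvtx_mem K hu m _
    · rw [clghost_mul_cledg_of_ne K h, mul_zero]; exact zero_mem _

theorem qVtx_mul_ghostWord_mul_clghost_mem (m : List E.Edge) (f : E.Edge) :
    qVtx K t hu * ghostWord K t m * E.clghost K t f ∈ qVtxGhostSpan K t hu := by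
  rw [mul_assoc, ← ghostWord_cons]; exact qVtx_mul_ghostWord_mem K hu _

theorem mul_mem_qVtxGhostSpan {x y : E.CL K t} (hx : x ∈ E.clSub K t)
    (hy : y ∈ qVtxGhostSpan K t hu) : y * x ∈ qVtxGhostSpan K t hu := by
  refine Submodule.mul_mem_span_of_mem_adjoin ?_ hx y hy
  rintro _ ⟨m, rfl⟩ _ ((⟨w, rfl⟩ | ⟨f, rfl⟩) | ⟨f, rfl⟩)
  exacts [qVtx_mul_ghostWord_mul_clvtx_mem K hu m w, qVtx_mul_ghostWord_mul_cledg_mem K hu m f,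
    qVtx_mul_ghostWord_mul_clghost_mem K hu m f]

theorem mul_qVtx_eq_zero_of_mem_qVtxGhostSpan {w : E.V} (hw : {e : E.Edge | E.s e = w}.Finite)
    (h : w ≠ u) {y : E.CL K t} (hy : y ∈ qVtxGhostSpan K t hu) : y * qVtx K t hw = 0 := by
  suffices qVtxGhostSpan K t hu ≤ LinearMap.ker (LinearMap.mulRight K (qVtx K t hw)) from this hy
  refine Submodule.span_le.mpr ?_
  rintro _ ⟨_ | ⟨e, m⟩, rfl⟩
  · simp [qVtx_mul_qVtx_of_ne K hu hw h]
  · simp [ghostWord_cons, mul_assoc, clghost_mul_qVtx]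

theorem qVtx_mul_mul_qVtx_of_ne {w : E.V} (hw : {e : E.Edge | E.s e = w}.Finite) (h : w ≠ u)
    {x : E.CL K t} (hx : x ∈ E.clSub K t) : qVtx K t hu * x * qVtx K t hw = 0 :=
  mul_qVtx_eq_zero_of_mem_qVtxGhostSpan K hu hw h
    (mul_mem_qVtxGhostSpan K hu hx (qVtx_mem_qVtxGhostSpan K hu))

end TwoVertices

theorem not_isPrimeSet_clSub_of_ne {u w : E.V} (hu : {e : E.Edge | E.s e = u}.Finite)
    (hw : {e : E.Edge | E.s e = w}.Finite) (h : w ≠ u) :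
    ¬ IsPrimeSet (E.clSub K false : Set (E.CL K false)) := by
  rintro ⟨-, hprime⟩
  rcases hprime _ (qVtx_mem_clSub K hu) _ (qVtx_mem_clSub K hw)
    fun x hx => qVtx_mul_mul_qVtx_of_ne K hu hw h hx with h0 | h0
  exacts [qVtx_ne_zero K hu h0, qVtx_ne_zero K hw h0]

section Paths

theorem clPath_nil (u : E.V) : E.clPath K t u [] = E.clvtx K t u := by simp [clPath]

theorem clPathStar_nil (u : E.V) : E.clPathStar K t u [] = E.clvtx K t u := by simp [clPathStar]

theorem clPath_cons (e : E.Edge) (l : List E.Edge) :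
    E.clPath K t (E.s e) (e :: l) = E.cledg K t e * E.clPath K t (E.r e) l := by
  rw [clPath, clPath, List.map_cons, List.prod_cons, ← mul_assoc, ← mul_assoc, clvtx_mul_cledg,
    cledg_mul_clvtx]

theorem clPathStar_cons (e : E.Edge) (l : List E.Edge) :
    E.clPathStar K t (E.s e) (e :: l) = E.clPathStar K t (E.r e) l * E.clghost K t e := by
  rw [clPathStar, clPathStar, List.map_cons, List.reverse_cons, List.prod_append,
    List.prod_singleton, mul_assoc, mul_assoc, clghost_mul_clvtx, clvtx_mul_clghost]

theorem clvtx_mul_clPath (u : E.V) (l : List E.Edge) :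
    E.clvtx K t u * E.clPath K t u l = E.clPath K t u l := by
  rw [clPath, ← mul_assoc, clvtx_mul_self]

theorem clPathStar_mul_clvtx (u : E.V) (l : List E.Edge) :
    E.clPathStar K t u l * E.clvtx K t u = E.clPathStar K t u l := by
  rw [clPathStar, mul_assoc, clvtx_mul_self]

theorem clPath_mem_clSub (u : E.V) (l : List E.Edge) : E.clPath K t u l ∈ E.clSub K t :=
  mul_list_prod_mem (clvtx_mem_clSub K u) (by simpa using fun e _ => cledg_mem_clSub K e)

theorem clPathStar_mem_clSub (u : E.V) (l : List E.Edge) : E.clPathStar K t u l ∈ E.clSub K t :=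
  list_prod_mul_mem (clvtx_mem_clSub K u) (by simpa using fun e _ => clghost_mem_clSub K e)

noncomputable def pathMonomialSpan (t : Bool) (v : E.V) : Submodule K (E.CL K t) :=
  Submodule.span K (Set.range fun pq : List E.Edge × List E.Edge =>
    E.clPath K t v pq.1 * E.clPathStar K t v pq.2)

end Paths

section OneVertex

variable [Subsingleton E.V] {v : E.V}

theorem clPath_cons_of_subsingleton (e : E.Edge) (l : List E.Edge) :
    E.clPath K t v (e :: l) = E.cledg K t e * E.clPath K t v l := by
  rw [Subsingleton.elim v (E.s e), clPath_cons, Subsingleton.elim (E.r e) (E.s e)]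

theorem clPathStar_cons_of_subsingleton (e : E.Edge) (l : List E.Edge) :
    E.clPathStar K t v (e :: l) = E.clPathStar K t v l * E.clghost K t e := by
  rw [Subsingleton.elim v (E.s e), clPathStar_cons, Subsingleton.elim (E.r e) (E.s e)]

theorem clghost_mul_cledg_of_subsingleton (v : E.V) (e : E.Edge) :
    E.clghost K t e * E.cledg K t e = E.clvtx K t v := by
  rw [clghost_mul_cledg, Subsingleton.elim (E.r e) v]

theorem clPath_mul_clvtx (p : List E.Edge) :
    E.clPath K t v p * E.clvtx K t v = E.clPath K t v p := by
  induction p with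
  | nil => rw [clPath_nil, clvtx_mul_self]
  | cons e p ih => rw [clPath_cons_of_subsingleton, mul_assoc, ih]

theorem clvtx_mul_clPathStar (q : List E.Edge) :
    E.clvtx K t v * E.clPathStar K t v q = E.clPathStar K t v q := by
  induction q with
  | nil => rw [clPathStar_nil, clvtx_mul_self]
  | cons e q ih => rw [clPathStar_cons_of_subsingleton, ← mul_assoc, ih]

theorem clPath_append (p p' : List E.Edge) :
    E.clPath K t v (p ++ p') = E.clPath K t v p * E.clPath K t v p' := by
  induction p with
  | nil => rw [List.nil_append, clPath_nil, clvtx_mul_clPath]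
  | cons e p ih => rw [List.cons_append, clPath_cons_of_subsingleton, clPath_cons_of_subsingleton,
      ih, mul_assoc]

theorem clPathStar_append (q q' : List E.Edge) :
    E.clPathStar K t v (q ++ q') = E.clPathStar K t v q' * E.clPathStar K t v q := by
  induction q with
  | nil => rw [List.nil_append, clPathStar_nil, clPathStar_mul_clvtx]
  | cons e q ih => rw [List.cons_append, clPathStar_cons_of_subsingleton,
      clPathStar_cons_of_subsingleton, ih, mul_assoc]

theorem clPathStar_mul_clPath_append (q s : List E.Edge) :
    E.clPathStar K t v q * E.clPath K t v (q ++ s) = E.clPath K t v s := by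
  induction q with
  | nil => rw [List.nil_append, clPathStar_nil, clvtx_mul_clPath]
  | cons e q ih =>
    rw [List.cons_append, clPathStar_cons_of_subsingleton, clPath_cons_of_subsingleton, mul_assoc,
      ← mul_assoc (E.clghost K t e), clghost_mul_cledg_of_subsingleton K v, clvtx_mul_clPath, ih]

theorem clPathStar_append_mul_clPath (p s : List E.Edge) :
    E.clPathStar K t v (p ++ s) * E.clPath K t v p = E.clPathStar K t v s := by
  induction p with
  | nil => rw [List.nil_append, clPath_nil, clPathStar_mul_clvtx]
  | cons e p ih =>
    rw [List.cons_append, clPathStar_cons_of_subsingleton, clPath_cons_of_subsingleton, mul_assoc,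
      ← mul_assoc (E.clghost K t e), clghost_mul_cledg_of_subsingleton K v, clvtx_mul_clPath, ih]

theorem clPathStar_mul_clPath_self (p : List E.Edge) :
    E.clPathStar K t v p * E.clPath K t v p = E.clvtx K t v := by
  simpa [clPath_nil] using clPathStar_mul_clPath_append K p [] (t := t) (v := v)

theorem clPathStar_mul_clPath_of_not_prefix {q p : List E.Edge} (h₁ : ¬ q <+: p)
    (h₂ : ¬ p <+: q) :
    E.clPathStar K t v q * E.clPath K t v p = 0 := by
  induction q generalizing p with
  | nil => exact absurd List.nil_prefix h₁
  | cons e q ih =>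
    cases p with
    | nil => exact absurd List.nil_prefix h₂
    | cons f p =>
      rw [clPathStar_cons_of_subsingleton, clPath_cons_of_subsingleton, mul_assoc,
        ← mul_assoc (E.clghost K t e)]
      by_cases hef : e = f
      · subst hef
        rw [clghost_mul_cledg_of_subsingleton K v, clvtx_mul_clPath]
        exact ih (by simpa using h₁) (by simpa using h₂)
      · rw [clghost_mul_cledg_of_ne K hef, zero_mul, mul_zero]

theorem clPath_mul_clPathStar_mul_mem (p q r s : List E.Edge) :
    E.clPath K t v p * E.clPathStar K t v q * (E.clPath K t v r * E.clPathStar K t v s) ∈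
      pathMonomialSpan K t v := by
  rw [mul_assoc, ← mul_assoc (E.clPathStar K t v q)]
  by_cases hqr : q <+: r
  · obtain ⟨w, rfl⟩ := hqr
    rw [clPathStar_mul_clPath_append, ← mul_assoc, ← clPath_append]
    exact Submodule.subset_span ⟨(p ++ w, s), rfl⟩
  by_cases hrq : r <+: q
  · obtain ⟨w, rfl⟩ := hrq
    rw [clPathStar_append_mul_clPath, ← clPathStar_append]
    exact Submodule.subset_span ⟨(p, s ++ w), rfl⟩
  rw [clPathStar_mul_clPath_of_not_prefix K hqr hrq, zero_mul, mul_zero]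
  exact zero_mem _

variable (v) in
theorem clSub_subset_pathMonomialSpan :
    (E.clSub K t : Set (E.CL K t)) ⊆ pathMonomialSpan K t v := by
  have hmul (x y : E.CL K t) (hx : x ∈ pathMonomialSpan K t v)
      (hy : y ∈ pathMonomialSpan K t v) : x * y ∈ pathMonomialSpan K t v := by
    have hxy := Submodule.mul_mem_mul hx hy
    rw [pathMonomialSpan, Submodule.span_mul_span] at hxy
    refine Submodule.span_le.mpr ?_ hxy
    rintro _ ⟨_, ⟨⟨p, q⟩, rfl⟩, _, ⟨⟨r, s⟩, rfl⟩, rfl⟩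
    exact clPath_mul_clPathStar_mul_mem K p q r s
  have hB (p q : List E.Edge) :
      E.clPath K t v p * E.clPathStar K t v q ∈ pathMonomialSpan K t v :=
    Submodule.subset_span ⟨(p, q), rfl⟩
  refine NonUnitalAlgebra.adjoin_le (S := (pathMonomialSpan K t v).toNonUnitalSubalgebra hmul) ?_
  rintro _ ((⟨w, rfl⟩ | ⟨e, rfl⟩) | ⟨e, rfl⟩)
  · simpa [Subsingleton.elim w v, clPath_nil, clPathStar_nil, clvtx_mul_self] using hB [] []
  · simpa [clPathStar_nil, clPath_mul_clvtx, clPath_cons_of_subsingleton, clPath_nil,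
      ← Subsingleton.elim (E.r e) v, cledg_mul_clvtx] using hB [e] []
  · simpa [clPath_nil, clvtx_mul_clPathStar, clPathStar_cons_of_subsingleton, clPathStar_nil,
      ← Subsingleton.elim (E.r e) v, clvtx_mul_clghost] using hB [] [e]

section Corner

variable (hv : {e : E.Edge | E.s e = v}.Finite)

theorem qVtx_mul_clPath_of_ne_nil {p : List E.Edge} (hp : p ≠ []) :
    qVtx K t hv * E.clPath K t v p = 0 := by
  obtain ⟨e, p, rfl⟩ := List.exists_cons_of_ne_nil hp
  rw [clPath_cons_of_subsingleton, ← mul_assoc, qVtx_mul_cledg, zero_mul]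

theorem clPathStar_mul_qVtx_of_ne_nil {q : List E.Edge} (hq : q ≠ []) :
    E.clPathStar K t v q * qVtx K t hv = 0 := by
  obtain ⟨e, q, rfl⟩ := List.exists_cons_of_ne_nil hq
  rw [clPathStar_cons_of_subsingleton, mul_assoc, clghost_mul_qVtx, mul_zero]

theorem qVtx_mul_clPathStar_mul_clPath_of_not_prefix {p₁ p : List E.Edge} (h : ¬ p <+: p₁) :
    qVtx K t hv * E.clPathStar K t v p₁ * E.clPath K t v p = 0 := by
  rw [mul_assoc]
  by_cases h' : p₁ <+: p
  · obtain ⟨s, rfl⟩ := h'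
    have hs : s ≠ [] := by rintro rfl; exact h (by simp)
    rw [clPathStar_mul_clPath_append, qVtx_mul_clPath_of_ne_nil K hv hs]
  · rw [clPathStar_mul_clPath_of_not_prefix K h' h, mul_zero]

theorem clPathStar_mul_clPath_mul_qVtx_of_not_prefix {q q₁ : List E.Edge} (h : ¬ q <+: q₁) :
    E.clPathStar K t v q * E.clPath K t v q₁ * qVtx K t hv = 0 := by
  by_cases h' : q₁ <+: q
  · obtain ⟨s, rfl⟩ := h'
    have hs : s ≠ [] := by rintro rfl; exact h (by simp)
    rw [clPathStar_append_mul_clPath, clPathStar_mul_qVtx_of_ne_nil K hv hs]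
  · rw [clPathStar_mul_clPath_of_not_prefix K h h', zero_mul]

theorem qVtx_sandwich_self (p q : List E.Edge) :
    qVtx K t hv * E.clPathStar K t v p * (E.clPath K t v p * E.clPathStar K t v q) *
      (E.clPath K t v q * qVtx K t hv) = qVtx K t hv := by
  calc _ = qVtx K t hv * (E.clPathStar K t v p * E.clPath K t v p) *
        ((E.clPathStar K t v q * E.clPath K t v q) * qVtx K t hv) := by simp only [mul_assoc]
    _ = qVtx K t hv := by
      rw [clPathStar_mul_clPath_self, clPathStar_mul_clPath_self, ← mul_assoc,
        qVtx_mul_clvtx_self, qVtx_mul_clvtx_self, qVtx_mul_self]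

theorem qVtx_sandwich_of_length_le {p q p₁ q₁ : List E.Edge} (hlen : p₁.length ≤ p.length)
    (hne : (p, q) ≠ (p₁, q₁)) :
    qVtx K t hv * E.clPathStar K t v p₁ * (E.clPath K t v p * E.clPathStar K t v q) *
      (E.clPath K t v q₁ * qVtx K t hv) = 0 := by
  calc _ = (qVtx K t hv * E.clPathStar K t v p₁ * E.clPath K t v p) *
        (E.clPathStar K t v q * E.clPath K t v q₁ * qVtx K t hv) := by simp only [mul_assoc]
    _ = 0 := by
      by_cases hp : p <+: p₁
      · obtain rfl := hp.eq_of_length_le hlen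
        by_cases hq : q <+: q₁
        · obtain ⟨s, rfl⟩ := hq
          have hs : s ≠ [] := by rintro rfl; simp at hne
          rw [mul_assoc (qVtx K t hv), clPathStar_mul_clPath_self, qVtx_mul_clvtx_self,
            clPathStar_mul_clPath_append, ← mul_assoc, qVtx_mul_clPath_of_ne_nil K hv hs,
            zero_mul]
        · rw [clPathStar_mul_clPath_mul_qVtx_of_not_prefix K hv hq, mul_zero]
      · rw [qVtx_mul_clPathStar_mul_clPath_of_not_prefix K hv hp, zero_mul]

theorem exists_mul_mul_eq_qVtx {a : E.CL K t} (ha : a ∈ pathMonomialSpan K t v) (ha0 : a ≠ 0) :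
    ∃ x ∈ E.clSub K t, ∃ y ∈ E.clSub K t, x * a * y = qVtx K t hv := by
  obtain ⟨c, rfl⟩ := Finsupp.mem_span_range_iff_exists_finsupp.mp ha
  have hc : c.support.Nonempty :=
    Finsupp.support_nonempty_iff.mpr (by rintro rfl; simp at ha0)
  obtain ⟨⟨p₁, q₁⟩, hmem, hmin⟩ := c.support.exists_min_image (fun pq => pq.1.length) hc
  have key : qVtx K t hv * E.clPathStar K t v p₁ *
      (c.sum fun pq k => k • (E.clPath K t v pq.1 * E.clPathStar K t v pq.2)) *
        (E.clPath K t v q₁ * qVtx K t hv) = c (p₁, q₁) • qVtx K t hv := by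
    rw [Finsupp.sum, Finset.mul_sum, Finset.sum_mul, Finset.sum_eq_single_of_mem (p₁, q₁) hmem]
    · rw [mul_smul_comm, smul_mul_assoc, qVtx_sandwich_self]
    · rintro ⟨p, q⟩ hpq hne
      rw [mul_smul_comm, smul_mul_assoc, qVtx_sandwich_of_length_le K hv (hmin _ hpq) hne,
        smul_zero]
  refine ⟨(c (p₁, q₁))⁻¹ • (qVtx K t hv * E.clPathStar K t v p₁),
    SMulMemClass.smul_mem _ (mul_mem (qVtx_mem_clSub K hv) (clPathStar_mem_clSub K v p₁)),
    E.clPath K t v q₁ * qVtx K t hv,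
    mul_mem (clPath_mem_clSub K v q₁) (qVtx_mem_clSub K hv), ?_⟩
  rw [smul_mul_assoc, smul_mul_assoc, key, smul_smul,
    inv_mul_cancel₀ (Finsupp.mem_support_iff.mp hmem), one_smul]

end Corner

theorem isPrimeSet_clSub_of_subsingleton (hv : {e : E.Edge | E.s e = v}.Finite) :
    IsPrimeSet (E.clSub K false : Set (E.CL K false)) :=
  isPrimeSet_of_forall_exists_mul_mul_eq _ (qVtx_mem_clSub K hv) (qVtx_ne_zero K hv)
    (qVtx_mul_self K hv) fun _ ha ha0 =>
      exists_mul_mul_eq_qVtx K hv (clSub_subset_pathMonomialSpan K v ha) ha0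

end OneVertex

end DirGraph

/-- For a row-finite graph `E`, the Cohn path algebra `C_K(E)` is prime
if and only if `E` has exactly one vertex. -/
theorem stmt14 (K : Type) [Field K] (E : DirGraph)
    (hrow : ∀ v : E.V, {e : E.Edge | E.s e = v}.Finite) :
    IsPrimeSet (E.clSub K false : Set (E.CL K false)) ↔ ∃ v : E.V, ∀ w : E.V, w = v := by
  constructor
  · intro hprime
    rcases isEmpty_or_nonempty E.V with hV | ⟨⟨v⟩⟩
    · exact absurd hprime (DirGraph.not_isPrimeSet_clSub_of_isEmpty K)
    · exact ⟨v, fun w => by_contra fun hwv =>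
        DirGraph.not_isPrimeSet_clSub_of_ne K (hrow v) (hrow w) hwv hprime⟩
  · rintro ⟨v, hv⟩
    have : Subsingleton E.V := ⟨fun a b => (hv a).trans (hv b).symm⟩
    exact DirGraph.isPrimeSet_clSub_of_subsingleton K (hrow v)
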